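/- arXiv:1305.6208 — 2 statements merged into one kernel-verified Lean document; each statement's English description precedes it below -/
import Mathlib

section
/- Let (X,μ) be a nonatomic probability space, T a tree on X, q ∈ (0,1), and φ a T-good function with ∫_X φ dμ = f. Let B = {I_j}_j be a family of pairwise disjoint elements of S_φ which is maximal in S_φ under inclusion, i.e. every I ∈ S_φ satisfies I ∩ (∪_j I_j) ≠ ∅. Then for every β > 0, ∫_{X \ ∪_j I_j} (M_T φ)^q dμ ≤ (1/((1−q)β)) · [ (β+1)( f^q − Σ_j μ(I_j)·y_{I_j}^q ) − (β+1)^q ∫_{X \ ∪_j I_j} φ^q dμ ], where y_{I_j} = Av_{I_j}(φ). -/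
open MeasureTheory Filter Set

noncomputable section

/-- A tree on a probability space, as in the paper. -/
structure DTree (X : Type*) [MeasurableSpace X] (μ : Measure X) where
  mem : Set (Set X)
  child : Set X → Set (Set X)
  meas : ∀ I ∈ mem, MeasurableSet I
  top_mem : Set.univ ∈ mem
  pos : ∀ I ∈ mem, 0 < μ I
  child_sub_mem : ∀ I ∈ mem, child I ⊆ mem
  child_countable : ∀ I ∈ mem, (child I).Countable
  child_two : ∀ I ∈ mem, ∃ J ∈ child I, ∃ K ∈ child I, J ≠ K
  child_sub : ∀ I ∈ mem, ∀ J ∈ child I, J ⊆ I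
  child_disj : ∀ I ∈ mem, (child I).Pairwise Disjoint
  child_union : ∀ I ∈ mem, ⋃₀ child I = I
  generated : ∃ lvl : ℕ → Set (Set X),
    lvl 0 = {Set.univ} ∧
    (∀ m, lvl (m + 1) = ⋃ I ∈ lvl m, child I) ∧
    mem = ⋃ m, lvl m ∧
    Tendsto (fun m => ⨆ I ∈ lvl m, μ I) atTop (nhds 0)

variable {X : Type*} [MeasurableSpace X]

/-- The average of `φ` over `I`. -/
def trAvg (μ : Measure X) (φ : X → ℝ) (I : Set X) : ℝ :=
  (μ I).toReal⁻¹ * ∫ x in I, φ x ∂μ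

/-- The dyadic maximal operator associated with the tree `T`. -/
def trMax (μ : Measure X) (T : DTree X μ) (φ : X → ℝ) (x : X) : ℝ :=
  sSup {r : ℝ | ∃ I ∈ T.mem, x ∈ I ∧ r = trAvg μ (fun y => |φ y|) I}

/-- The exceptional set `A_φ`. -/
def trBad (μ : Measure X) (T : DTree X μ) (φ : X → ℝ) : Set X :=
  {x | ∀ I ∈ T.mem, x ∈ I → trAvg μ φ I < trMax μ T φ x}

/-- `φ` is `T`-good if the exceptional set `A_φ` is null. -/
def TGood (μ : Measure X) (T : DTree X μ) (φ : X → ℝ) : Prop :=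
  μ (trBad μ T φ) = 0

/-- The set `A(φ, I) = {x ∈ X \ A_φ : I_φ(x) = I}`, where `I_φ(x)` is the largest
element `I` of the tree with `x ∈ I` and `M_T φ x = Av_I(φ)`. -/
def trA (μ : Measure X) (T : DTree X μ) (φ : X → ℝ) (I : Set X) : Set X :=
  {x | x ∉ trBad μ T φ ∧ I ∈ T.mem ∧ x ∈ I ∧ trMax μ T φ x = trAvg μ φ I ∧
    ∀ J ∈ T.mem, x ∈ J → trMax μ T φ x = trAvg μ φ J → J ⊆ I}

/-- The subtree `S_φ`. -/
def trS (μ : Measure X) (T : DTree X μ) (φ : X → ℝ) : Set (Set X) :=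
  {I | I ∈ T.mem ∧ 0 < μ (trA μ T φ I)} ∪ {Set.univ}

/-- `J* = I` : `I` is the smallest element of `S_φ` properly containing `J`. -/
def IsStarOf (μ : Measure X) (T : DTree X μ) (φ : X → ℝ) (J I : Set X) : Prop :=
  I ∈ trS μ T φ ∧ J ⊂ I ∧ ∀ K ∈ trS μ T φ, J ⊂ K → I ⊆ K

/-- `H_q(z) = (1-q) z^q + q z^(q-1)`. -/
def funH (q z : ℝ) : ℝ := (1 - q) * z ^ q + q * z ^ (q - 1)

/-- `ω_q(z) = (H_q⁻¹(z))^q`, with `H_q⁻¹` the inverse of `H_q : [1,∞) → [1,∞)`. -/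
def funOmega (q z : ℝ) : ℝ := (Function.invFunOn (funH q) (Set.Ici 1) z) ^ q

/-- The constant `c = ω_q(((1-q)L^q + qL^(q-1)f)/h)`. -/
def bellC (q f h L : ℝ) : ℝ := funOmega q (((1 - q) * L ^ q + q * L ^ (q - 1) * f) / h)

/-- An extremal sequence for the Bellman function of three variables. -/
def IsExtremal (μ : Measure X) (T : DTree X μ) (q f h L : ℝ) (φ : ℕ → X → ℝ) : Prop :=
  (∀ n x, 0 ≤ φ n x) ∧ (∀ n, Measurable (φ n)) ∧ (∀ n, Integrable (φ n) μ) ∧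
  (∀ n, ∫ x, φ n x ∂μ = f) ∧ (∀ n, ∫ x, φ n x ^ q ∂μ = h) ∧
  Tendsto (fun n => ∫ x, (max (trMax μ T (φ n) x) L) ^ q ∂μ) atTop
    (nhds (bellC q f h L * h))

/-!
Let `g` be the maximal function of `φ` over the elements of the tree that are not strictly inside
any `I j`. Since an element of `S_φ` has the largest average among the elements of the tree that
contain it, `g = M_T φ` off `⋃ j, I j` and `g = y_j := Av_{I j}(φ)` on `I j`; moreover `g ≥ f`,
and covering `{g > t}` by the maximal elements of the tree with average `> t` gives the weak type
inequality `t μ{g > t} ≤ ∫_{g > t} φ`. In layer-cake form,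
`(1-q) ∫ g^q + q ∫ φ g^(q-1) = q(1-q) ∫_0^∞ (t^(q-1) μ{g > t} + t^(q-2) ∫_{g < t} φ) dt`,
and the weak type inequality bounds the integrand by `q(1-q) t^(q-1)` for `t ≤ f` and by
`q(1-q) t^(q-2) f` for `t > f`, so the left side is at most `f^q`; on each `I j` both integrands
integrate to `μ(I j) y_j^q`. Off `⋃ j, I j`, the tangent line of the concave `z ↦ z^q` at `g`,
evaluated at `(β+1) φ`, gives `(β+1)^q φ^q ≤ q (β+1) φ g^(q-1) + (1-q) g^q`; adding `β+1` times
the first estimate gives the claim.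
-/

open scoped ENNReal

namespace DTree

variable {μ : Measure X} (T : DTree X μ)

/-- The levels `T_(m)` of the tree. -/
def lvl : ℕ → Set (Set X) := T.generated.choose

lemma lvl_zero : T.lvl 0 = {univ} := T.generated.choose_spec.1

lemma lvl_succ (m : ℕ) : T.lvl (m + 1) = ⋃ I ∈ T.lvl m, T.child I :=
  T.generated.choose_spec.2.1 m

lemma mem_lvl_succ {m : ℕ} {J : Set X} : J ∈ T.lvl (m + 1) ↔ ∃ I ∈ T.lvl m, J ∈ T.child I := by
  simp only [lvl_succ, mem_iUnion, exists_prop]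

lemma mem_eq_iUnion_lvl : T.mem = ⋃ m, T.lvl m := T.generated.choose_spec.2.2.1

lemma lvl_subset_mem (m : ℕ) : T.lvl m ⊆ T.mem :=
  T.mem_eq_iUnion_lvl ▸ subset_iUnion T.lvl m

lemma exists_mem_lvl {I : Set X} (hI : I ∈ T.mem) : ∃ m, I ∈ T.lvl m :=
  mem_iUnion.1 (T.mem_eq_iUnion_lvl ▸ hI)

lemma countable_mem : T.mem.Countable := by
  rw [mem_eq_iUnion_lvl]
  refine countable_iUnion fun m => ?_
  induction m with
  | zero => rw [lvl_zero]; exact countable_singleton _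
  | succ m ih =>
    rw [lvl_succ]
    exact ih.biUnion fun I hI => T.child_countable I (T.lvl_subset_mem m hI)

lemma nonempty_of_mem {I : Set X} (hI : I ∈ T.mem) : I.Nonempty :=
  nonempty_of_measure_ne_zero (T.pos I hI).ne'

lemma pairwise_disjoint_lvl (m : ℕ) : (T.lvl m).Pairwise Disjoint := by
  induction m with
  | zero => rw [lvl_zero]; exact pairwise_singleton _ _
  | succ m ih =>
    intro J hJ K hK hJK
    obtain ⟨I₁, hI₁, hJ₁⟩ := T.mem_lvl_succ.1 hJ
    obtain ⟨I₂, hI₂, hK₂⟩ := T.mem_lvl_succ.1 hK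
    obtain rfl | h12 := eq_or_ne I₁ I₂
    · exact T.child_disj I₁ (T.lvl_subset_mem m hI₁) hJ₁ hK₂ hJK
    · exact (ih hI₁ hI₂ h12).mono (T.child_sub I₁ (T.lvl_subset_mem m hI₁) J hJ₁)
        (T.child_sub I₂ (T.lvl_subset_mem m hI₂) K hK₂)

lemma exists_lvl_superset {m k : ℕ} (hmk : m ≤ k) {J : Set X} (hJ : J ∈ T.lvl k) :
    ∃ W ∈ T.lvl m, J ⊆ W := by
  induction k, hmk using Nat.le_induction generalizing J with
  | base => exact ⟨J, hJ, subset_rfl⟩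
  | succ k _ ih =>
    obtain ⟨I, hI, hJI⟩ := T.mem_lvl_succ.1 hJ
    obtain ⟨W, hW, hIW⟩ := ih hI
    exact ⟨W, hW, (T.child_sub I (T.lvl_subset_mem k hI) J hJI).trans hIW⟩

lemma subset_or_subset_of_not_disjoint {I J : Set X} (hI : I ∈ T.mem) (hJ : J ∈ T.mem)
    (h : ¬Disjoint I J) : I ⊆ J ∨ J ⊆ I := by
  obtain ⟨m, hm⟩ := T.exists_mem_lvl hI
  obtain ⟨k, hk⟩ := T.exists_mem_lvl hJ
  wlog hmk : m ≤ k generalizing I J m k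
  · exact (this hJ hI (by rwa [disjoint_comm]) k hk m hm (by omega)).symm
  obtain ⟨W, hW, hJW⟩ := T.exists_lvl_superset hmk hk
  obtain rfl | hIW := eq_or_ne I W
  · exact Or.inr hJW
  · exact absurd ((T.pairwise_disjoint_lvl m hm hW hIW).mono_right hJW) h

lemma exists_lvl_lt_of_ssubset {m : ℕ} {I J : Set X} (hI : I ∈ T.lvl m) (hJ : J ∈ T.mem)
    (hIJ : I ⊂ J) : ∃ k < m, J ∈ T.lvl k := by
  obtain ⟨k, hk⟩ := T.exists_mem_lvl hJ
  refine ⟨k, lt_of_not_ge fun hmk => ?_, hk⟩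
  obtain ⟨W, hW, hJW⟩ := T.exists_lvl_superset hmk hk
  obtain ⟨x, hx⟩ := T.nonempty_of_mem (T.lvl_subset_mem m hI)
  obtain rfl : I = W := by
    by_contra hIW
    exact (T.pairwise_disjoint_lvl m hI hW hIW).ne_of_mem hx (hJW (hIJ.subset hx)) rfl
  exact hIJ.not_subset hJW

lemma exists_maximal_superset {D : Set (Set X)} (hD : D ⊆ T.mem) {I : Set X} (hI : I ∈ D) :
    ∃ K, Maximal (· ∈ D) K ∧ I ⊆ K := by
  obtain ⟨m, hm⟩ := T.exists_mem_lvl (hD hI)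
  induction m using Nat.strong_induction_on generalizing I with
  | _ m ih =>
    by_cases hmax : Maximal (· ∈ D) I
    · exact ⟨I, hmax, subset_rfl⟩
    obtain ⟨J, hJ, hIJ⟩ := not_maximal_iff hI |>.1 hmax
    obtain ⟨k, hkm, hk⟩ := T.exists_lvl_lt_of_ssubset hm (hD hJ) hIJ
    obtain ⟨K, hK, hJK⟩ := ih k hkm hJ hk
    exact ⟨K, hK, hIJ.1.trans hJK⟩

lemma pairwise_disjoint_maximal {D : Set (Set X)} (hD : D ⊆ T.mem) :
    {K | Maximal (· ∈ D) K}.Pairwise Disjoint := by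
  intro K hK K' hK' hne
  by_contra h
  rcases T.subset_or_subset_of_not_disjoint (hD hK.prop) (hD hK'.prop) h with h' | h'
  · exact hne (hK.eq_of_le hK'.prop h')
  · exact hne (hK'.eq_of_le hK.prop h').symm

/-- The maximal elements of `D` are pairwise disjoint and have the same union as `D`. -/
lemma mul_measure_sUnion_le {D : Set (Set X)} (hD : D ⊆ T.mem) (ν : Measure X) (c : ℝ≥0∞)
    (h : ∀ K ∈ D, c * μ K ≤ ν K) : c * μ (⋃₀ D) ≤ ν (⋃₀ D) := by
  set Dm := {K | Maximal (· ∈ D) K}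
  have hDm : Dm ⊆ D := fun K hK => hK.prop
  have hunion : ⋃₀ Dm = ⋃₀ D := (sUnion_mono hDm).antisymm <| sUnion_subset fun I hI =>
    let ⟨K, hK, hIK⟩ := T.exists_maximal_superset hD hI
    hIK.trans (subset_sUnion_of_mem hK)
  have hcount : Dm.Countable := T.countable_mem.mono (hDm.trans hD)
  have hmeas : ∀ K ∈ Dm, MeasurableSet K := fun K hK => T.meas K (hD hK.prop)
  rw [← hunion, measure_sUnion hcount (T.pairwise_disjoint_maximal hD) hmeas,
    measure_sUnion hcount (T.pairwise_disjoint_maximal hD) hmeas, ← ENNReal.tsum_mul_left]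
  exact ENNReal.tsum_le_tsum fun K => h K (hDm K.2)

end DTree

section Maximal

variable {μ : Measure X} {φ : X → ℝ}

lemma trAvg_nonneg (h0 : ∀ x, 0 ≤ φ x) (I : Set X) : 0 ≤ trAvg μ φ I :=
  mul_nonneg (inv_nonneg.2 ENNReal.toReal_nonneg) (integral_nonneg h0)

lemma trAvg_univ [IsProbabilityMeasure μ] : trAvg μ φ univ = ∫ x, φ x ∂μ := by
  simp [trAvg]

lemma toReal_measure_mul_trAvg [IsFiniteMeasure μ] (I : Set X) :
    (μ I).toReal * trAvg μ φ I = ∫ x in I, φ x ∂μ := by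
  rcases eq_or_ne (μ I) 0 with h | h
  · rw [h, Measure.restrict_eq_zero.2 h, integral_zero_measure, ENNReal.toReal_zero, zero_mul]
  · rw [trAvg, mul_inv_cancel_left₀ (ENNReal.toReal_ne_zero.2 ⟨h, measure_ne_top μ I⟩)]

lemma withDensity_ofReal_apply [IsFiniteMeasure μ] (h0 : ∀ x, 0 ≤ φ x) (hint : Integrable φ μ)
    {I : Set X} (hI : MeasurableSet I) :
    μ.withDensity (fun x => ENNReal.ofReal (φ x)) I = ENNReal.ofReal (trAvg μ φ I) * μ I := by
  rw [withDensity_apply _ hI, ← ofReal_integral_eq_lintegral_ofReal hint.integrableOn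
    (ae_of_all _ h0), ← toReal_measure_mul_trAvg, ENNReal.ofReal_mul ENNReal.toReal_nonneg,
    ENNReal.ofReal_toReal (measure_ne_top μ I), mul_comm]

/-- Valued in `ℝ≥0∞`, so that unbounded averages give `⊤` rather than the junk value `0` that
the real `sSup` takes in `trMax`. -/
def trMaxOn (μ : Measure X) (D : Set (Set X)) (φ : X → ℝ) (x : X) : ℝ≥0∞ :=
  ⨆ K ∈ D, K.indicator (fun _ => ENNReal.ofReal (trAvg μ φ K)) x

variable {D : Set (Set X)} {x : X}

lemma measurable_trMaxOn (hD : D.Countable) (hmeas : ∀ K ∈ D, MeasurableSet K) :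
    Measurable (trMaxOn μ D φ) :=
  Measurable.biSup D hD fun K hK => measurable_const.indicator (hmeas K hK)

lemma trMaxOn_le_iff {c : ℝ≥0∞} :
    trMaxOn μ D φ x ≤ c ↔ ∀ K ∈ D, x ∈ K → ENNReal.ofReal (trAvg μ φ K) ≤ c := by
  simp only [trMaxOn, iSup₂_le_iff]
  refine forall₂_congr fun K _ => ⟨fun h hx => ?_, fun h => indicator_apply_le' h fun _ => zero_le⟩
  rwa [indicator_of_mem hx] at h

lemma ofReal_trAvg_le_trMaxOn {K : Set X} (hK : K ∈ D) (hx : x ∈ K) :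
    ENNReal.ofReal (trAvg μ φ K) ≤ trMaxOn μ D φ x :=
  trMaxOn_le_iff.1 le_rfl K hK hx

lemma lt_trMaxOn_iff {c : ℝ≥0∞} :
    c < trMaxOn μ D φ x ↔ ∃ K ∈ D, x ∈ K ∧ c < ENNReal.ofReal (trAvg μ φ K) := by
  simp only [← not_le, trMaxOn_le_iff, not_forall, exists_prop]

lemma trMaxOn_mono {D' : Set (Set X)} (h : D ⊆ D') : trMaxOn μ D φ x ≤ trMaxOn μ D' φ x :=
  trMaxOn_le_iff.2 fun _ hK hx => ofReal_trAvg_le_trMaxOn (h hK) hx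

lemma trMax_of_nonneg (T : DTree X μ) (h0 : ∀ x, 0 ≤ φ x) :
    trMax μ T φ x = sSup {r | ∃ I ∈ T.mem, x ∈ I ∧ r = trAvg μ φ I} := by
  simp only [trMax, abs_of_nonneg (h0 _)]

lemma bddAbove_of_trMaxOn_ne_top (T : DTree X μ) (hx : trMaxOn μ T.mem φ x ≠ ⊤) :
    BddAbove {r | ∃ I ∈ T.mem, x ∈ I ∧ r = trAvg μ φ I} := by
  refine ⟨(trMaxOn μ T.mem φ x).toReal, ?_⟩
  rintro r ⟨I, hI, hxI, rfl⟩
  exact (ENNReal.ofReal_le_iff_le_toReal hx).1 (ofReal_trAvg_le_trMaxOn hI hxI)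

lemma trAvg_le_trMax (T : DTree X μ) (h0 : ∀ x, 0 ≤ φ x) (hx : trMaxOn μ T.mem φ x ≠ ⊤)
    {K : Set X} (hK : K ∈ T.mem) (hxK : x ∈ K) : trAvg μ φ K ≤ trMax μ T φ x := by
  rw [trMax_of_nonneg T h0]
  exact le_csSup (bddAbove_of_trMaxOn_ne_top T hx) ⟨K, hK, hxK, rfl⟩

lemma trMax_eq_toReal_trMaxOn (T : DTree X μ) (h0 : ∀ x, 0 ≤ φ x)
    (hx : trMaxOn μ T.mem φ x ≠ ⊤) : trMax μ T φ x = (trMaxOn μ T.mem φ x).toReal := by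
  refine le_antisymm ?_ (ENNReal.toReal_le_of_le_ofReal ?_ (trMaxOn_le_iff.2 fun K hK hxK =>
    ENNReal.ofReal_le_ofReal (trAvg_le_trMax T h0 hx hK hxK)))
  · rw [trMax_of_nonneg T h0]
    refine csSup_le ⟨_, univ, T.top_mem, mem_univ x, rfl⟩ ?_
    rintro r ⟨I, hI, hxI, rfl⟩
    exact (ENNReal.ofReal_le_iff_le_toReal hx).1 (ofReal_trAvg_le_trMaxOn hI hxI)
  · exact (trAvg_nonneg h0 univ).trans (trAvg_le_trMax T h0 hx T.top_mem (mem_univ x))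

end Maximal

namespace DTree

variable {μ : Measure X} {φ : X → ℝ}

lemma trS_subset_mem (T : DTree X μ) : trS μ T φ ⊆ T.mem := by
  rintro I (hI | hI)
  · exact hI.1
  · exact (mem_singleton_iff.1 hI) ▸ T.top_mem

section WeakType

variable [IsProbabilityMeasure μ] (T : DTree X μ) (h0 : ∀ x, 0 ≤ φ x) (hint : Integrable φ μ)
  {D : Set (Set X)}
include h0 hint

lemma ofReal_mul_measure_lt_trMaxOn_le (hD : D ⊆ T.mem) (s : ℝ) :
    ENNReal.ofReal s * μ {x | ENNReal.ofReal s < trMaxOn μ D φ x} ≤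
      μ.withDensity (fun x => ENNReal.ofReal (φ x)) {x | ENNReal.ofReal s < trMaxOn μ D φ x} := by
  have hlevel : {x | ENNReal.ofReal s < trMaxOn μ D φ x} =
      ⋃₀ {K | K ∈ D ∧ ENNReal.ofReal s < ENNReal.ofReal (trAvg μ φ K)} := by
    ext x
    simp only [mem_ofPred_eq, lt_trMaxOn_iff, mem_sUnion]
    exact ⟨fun ⟨K, hK, hx, hs⟩ => ⟨K, ⟨hK, hs⟩, hx⟩, fun ⟨K, ⟨hK, hs⟩, hx⟩ => ⟨K, hK, hx, hs⟩⟩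
  rw [hlevel]
  refine T.mul_measure_sUnion_le (fun K hK => hD hK.1) _ _ fun K hK => ?_
  rw [withDensity_ofReal_apply h0 hint (T.meas K (hD hK.1))]
  exact mul_le_mul_left hK.2.le _

lemma ae_trMaxOn_lt_top (hD : D ⊆ T.mem) : ∀ᵐ x ∂μ, trMaxOn μ D φ x < ⊤ := by
  set N := {x | trMaxOn μ D φ x = ⊤}
  have hbound (s : ℝ) : ENNReal.ofReal s * μ N ≤ ENNReal.ofReal (∫ x, φ x ∂μ) := calc
    ENNReal.ofReal s * μ N ≤ ENNReal.ofReal s * μ {x | ENNReal.ofReal s < trMaxOn μ D φ x} := by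
      gcongr
      intro x (hx : _ = ⊤)
      simp [hx]
    _ ≤ μ.withDensity (fun x => ENNReal.ofReal (φ x)) univ :=
      (T.ofReal_mul_measure_lt_trMaxOn_le h0 hint hD s).trans (measure_mono (subset_univ _))
    _ = ENNReal.ofReal (∫ x, φ x ∂μ) := by
      rw [withDensity_ofReal_apply h0 hint MeasurableSet.univ, measure_univ, mul_one, trAvg_univ]
  simp only [ae_iff, not_lt, top_le_iff]
  by_contra hN
  obtain ⟨n, hn⟩ := ENNReal.exists_nat_mul_gt hN ENNReal.ofReal_ne_top
  exact (hbound n).not_gt (by rwa [ENNReal.ofReal_natCast])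

lemma trAvg_le_of_mem_trS {I K : Set X} (hI : I ∈ trS μ T φ) (hK : K ∈ T.mem) (hIK : I ⊆ K) :
    trAvg μ φ K ≤ trAvg μ φ I := by
  rcases hI with ⟨-, hpos⟩ | hI
  · obtain ⟨x, hxA, hx⟩ : (trA μ T φ I ∩ {x | trMaxOn μ T.mem φ x < ⊤}).Nonempty := by
      refine nonempty_of_measure_ne_zero (μ := μ) ?_
      rw [measure_inter_conull (T.ae_trMaxOn_lt_top h0 hint subset_rfl)]
      exact hpos.ne'
    rw [← hxA.2.2.2.1]
    exact trAvg_le_trMax T h0 hx.ne hK (hIK hxA.2.2.1)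
  · rw [mem_singleton_iff.1 hI, univ_subset_iff] at hIK
    rw [hIK, mem_singleton_iff.1 hI]

end WeakType

variable (T : DTree X μ) {ι : Type*} (I : ι → Set X)

/-- Its maximal function is `M_T φ` off `⋃ j, I j` and `Av_{I j}(φ)` on `I j`. -/
def stoppedFamily : Set (Set X) := {K | K ∈ T.mem ∧ ∀ j, ¬K ⊂ I j}

lemma stoppedFamily_subset_mem : T.stoppedFamily I ⊆ T.mem := fun _ hK => hK.1

variable {x : X}

lemma measurable_trMaxOn_stoppedFamily : Measurable (trMaxOn μ (T.stoppedFamily I) φ) :=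
  measurable_trMaxOn (T.countable_mem.mono (T.stoppedFamily_subset_mem I)) fun K hK => T.meas K hK.1

lemma trMaxOn_stoppedFamily_of_notMem (hx : x ∉ ⋃ j, I j) :
    trMaxOn μ (T.stoppedFamily I) φ x = trMaxOn μ T.mem φ x :=
  (trMaxOn_mono (T.stoppedFamily_subset_mem I)).antisymm <| trMaxOn_le_iff.2 fun _ hK hxK =>
    ofReal_trAvg_le_trMaxOn ⟨hK, fun j hKj => hx (mem_iUnion.2 ⟨j, hKj.subset hxK⟩)⟩ hxK

variable [IsProbabilityMeasure μ]

lemma ofReal_integral_le_trMaxOn_stoppedFamily :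
    ENNReal.ofReal (∫ x, φ x ∂μ) ≤ trMaxOn μ (T.stoppedFamily I) φ x := by
  rw [← trAvg_univ]
  exact ofReal_trAvg_le_trMaxOn ⟨T.top_mem, fun j h => h.2 (subset_univ _)⟩ (mem_univ x)

lemma trMaxOn_stoppedFamily_of_mem (h0 : ∀ x, 0 ≤ φ x) (hint : Integrable φ μ)
    (hI : ∀ j, I j ∈ trS μ T φ) (hdisj : Pairwise (Function.onFun Disjoint I)) {j : ι}
    (hx : x ∈ I j) : trMaxOn μ (T.stoppedFamily I) φ x = ENNReal.ofReal (trAvg μ φ (I j)) := by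
  have hIj := T.trS_subset_mem (hI j)
  refine le_antisymm (trMaxOn_le_iff.2 fun K hK hxK => ENNReal.ofReal_le_ofReal
    (T.trAvg_le_of_mem_trS h0 hint (hI j) hK.1 ?_))
    (ofReal_trAvg_le_trMaxOn ⟨hIj, fun k hjk => ?_⟩ hx)
  · rcases T.subset_or_subset_of_not_disjoint hIj hK.1 (not_disjoint_iff.2 ⟨x, hx, hxK⟩) with h | h
    · exact h
    · exact (h.ssubset_or_eq.resolve_left (hK.2 j)).ge
  · obtain rfl | hkj := eq_or_ne k j
    · exact hjk.ne rfl
    · exact (hdisj hkj.symm).ne_of_mem hx (hjk.subset hx) rfl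

end DTree

section LayerCake

variable {q : ℝ}

lemma lintegral_Ioo_ofReal_mul_rpow (hq : 0 < q) {r : ℝ} (hr : 0 ≤ r) :
    ∫⁻ t in Ioo 0 r, ENNReal.ofReal (q * t ^ (q - 1)) = ENNReal.ofReal (r ^ q) := by
  have hint : IntegrableOn (fun t : ℝ => q * t ^ (q - 1)) (Ioc 0 r) := by
    refine (intervalIntegrable_iff_integrableOn_Ioc_of_le hr).1 ?_
    exact (intervalIntegral.intervalIntegrable_rpow' (by linarith)).const_mul q
  rw [setLIntegral_congr Ioo_ae_eq_Ioc, ← ofReal_integral_eq_lintegral_ofReal hint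
    ((ae_restrict_iff' measurableSet_Ioc).2 (ae_of_all _ fun t ht =>
      mul_nonneg hq.le (Real.rpow_nonneg ht.1.le _))),
    ← intervalIntegral.integral_of_le hr, intervalIntegral.integral_const_mul,
    integral_rpow (Or.inl (by linarith)), sub_add_cancel, Real.zero_rpow hq.ne', sub_zero,
    mul_div_cancel₀ _ hq.ne']

lemma lintegral_Ioi_ofReal_mul_rpow (hq : q < 1) {r : ℝ} (hr : 0 < r) :
    ∫⁻ t in Ioi r, ENNReal.ofReal ((1 - q) * t ^ (q - 2)) = ENNReal.ofReal (r ^ (q - 1)) := by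
  have hint : IntegrableOn (fun t : ℝ => (1 - q) * t ^ (q - 2)) (Ioi r) :=
    (integrableOn_Ioi_rpow_of_lt (by linarith) hr).const_mul (1 - q)
  rw [← ofReal_integral_eq_lintegral_ofReal hint
    ((ae_restrict_iff' measurableSet_Ioi).2 (ae_of_all _ fun t ht =>
      mul_nonneg (by linarith) (Real.rpow_nonneg (hr.trans ht).le _))),
    integral_const_mul, integral_Ioi_rpow_of_lt (by linarith) hr]
  have hq' : q - 1 ≠ 0 := by linarith
  rw [show q - 2 + 1 = q - 1 by ring]
  congr 1
  field_simp
  ring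

lemma lintegral_Ioi_zero_ofReal_mul_rpow (hq : 0 < q) :
    ∫⁻ t in Ioi 0, ENNReal.ofReal (q * t ^ (q - 1)) = ⊤ := by
  refine top_unique (le_of_tendsto (ENNReal.tendsto_ofReal_atTop.comp (tendsto_rpow_atTop hq)) ?_)
  filter_upwards [eventually_ge_atTop 0] with r hr
  rw [Function.comp_apply, ← lintegral_Ioo_ofReal_mul_rpow hq hr]
  exact lintegral_mono_set Ioo_subset_Ioi_self

lemma rpow_eq_lintegral_indicator (hq : 0 < q) (b : ℝ≥0∞) :
    b ^ q = ∫⁻ t in Ioi 0,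
      {t : ℝ | ENNReal.ofReal t < b}.indicator (fun t => ENNReal.ofReal (q * t ^ (q - 1))) t := by
  rw [lintegral_indicator (measurableSet_lt ENNReal.measurable_ofReal measurable_const),
    Measure.restrict_restrict (measurableSet_lt ENNReal.measurable_ofReal measurable_const)]
  rcases eq_or_ne b ⊤ with rfl | hb
  · simp [ENNReal.top_rpow_of_pos hq, lintegral_Ioi_zero_ofReal_mul_rpow hq]
  · have hset : {t : ℝ | ENNReal.ofReal t < b} ∩ Ioi 0 = Ioo 0 b.toReal := by
      ext t
      exact ⟨fun ⟨h1, h2⟩ => ⟨h2, (ENNReal.ofReal_lt_iff_lt_toReal (le_of_lt h2) hb).1 h1⟩,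
        fun ⟨h1, h2⟩ => ⟨(ENNReal.ofReal_lt_iff_lt_toReal h1.le hb).2 h2, h1⟩⟩
    rw [hset, lintegral_Ioo_ofReal_mul_rpow hq ENNReal.toReal_nonneg,
      ← ENNReal.ofReal_rpow_of_nonneg ENNReal.toReal_nonneg hq.le, ENNReal.ofReal_toReal hb]

lemma rpow_sub_one_eq_lintegral_indicator (hq : q < 1) {b : ℝ≥0∞} (hb : b ≠ 0) :
    b ^ (q - 1) = ∫⁻ t in Ioi 0,
      {t : ℝ | b < ENNReal.ofReal t}.indicator
        (fun t => ENNReal.ofReal ((1 - q) * t ^ (q - 2))) t := by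
  rw [lintegral_indicator (measurableSet_lt measurable_const ENNReal.measurable_ofReal),
    Measure.restrict_restrict (measurableSet_lt measurable_const ENNReal.measurable_ofReal)]
  rcases eq_or_ne b ⊤ with rfl | hb'
  · simp [ENNReal.top_rpow_of_neg (by linarith : q - 1 < 0)]
  · have hpos : 0 < b.toReal := ENNReal.toReal_pos hb hb'
    have hset : {t : ℝ | b < ENNReal.ofReal t} ∩ Ioi 0 = Ioi b.toReal := by
      ext t
      exact ⟨fun ⟨h1, _⟩ => (ENNReal.lt_ofReal_iff_toReal_lt hb').1 h1,
        fun h => ⟨(ENNReal.lt_ofReal_iff_toReal_lt hb').2 h, hpos.trans h⟩⟩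
    rw [hset, lintegral_Ioi_ofReal_mul_rpow hq hpos, ← ENNReal.ofReal_rpow_of_pos hpos,
      ENNReal.ofReal_toReal hb']

lemma lintegral_lintegral_indicator_swap {Y : Type*} [MeasurableSpace Y] {ρ : Measure X}
    [SFinite ρ] (τ : Measure Y) [SFinite τ] {A : Set (X × Y)} (hA : MeasurableSet A)
    {k : Y → ℝ≥0∞} (hk : Measurable k) :
    ∫⁻ x, ∫⁻ t, {t | (x, t) ∈ A}.indicator k t ∂τ ∂ρ = ∫⁻ t, k t * ρ {x | (x, t) ∈ A} ∂τ := by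
  have hm : Measurable (Function.uncurry fun x t => {t | (x, t) ∈ A}.indicator k t) :=
    (hk.comp measurable_snd).indicator hA
  rw [lintegral_lintegral_swap hm.aemeasurable]
  refine lintegral_congr fun t => ?_
  exact lintegral_indicator_const (measurable_prodMk_right hA) (k t)

variable {ρ : Measure X} [SFinite ρ] {g : X → ℝ≥0∞}

lemma lintegral_rpow_eq_lintegral_meas_lt (hq : 0 < q) (hg : Measurable g) :
    ∫⁻ x, g x ^ q ∂ρ =
      ∫⁻ t in Ioi 0, ENNReal.ofReal (q * t ^ (q - 1)) * ρ {x | ENNReal.ofReal t < g x} := by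
  simp_rw [rpow_eq_lintegral_indicator hq (g _)]
  exact lintegral_lintegral_indicator_swap _
    (measurableSet_lt (ENNReal.measurable_ofReal.comp measurable_snd) (hg.comp measurable_fst))
    (ENNReal.measurable_ofReal.comp ((measurable_id.pow_const _).const_mul q))

lemma lintegral_rpow_sub_one_eq_lintegral_meas_gt (hq : q < 1) (hg : Measurable g)
    (hg0 : ∀ x, g x ≠ 0) :
    ∫⁻ x, g x ^ (q - 1) ∂ρ =
      ∫⁻ t in Ioi 0, ENNReal.ofReal ((1 - q) * t ^ (q - 2)) * ρ {x | g x < ENNReal.ofReal t} := by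
  simp_rw [rpow_sub_one_eq_lintegral_indicator hq (hg0 _)]
  exact lintegral_lintegral_indicator_swap _
    (measurableSet_lt (hg.comp measurable_fst) (ENNReal.measurable_ofReal.comp measurable_snd))
    (ENNReal.measurable_ofReal.comp ((measurable_id.pow_const _).const_mul (1 - q)))

def layerBound (q f t : ℝ) : ℝ≥0∞ :=
  (Ioc 0 f).indicator (fun t => ENNReal.ofReal (1 - q) * ENNReal.ofReal (q * t ^ (q - 1))) t +
    (Ioi f).indicator
      (fun t => ENNReal.ofReal q * ENNReal.ofReal ((1 - q) * t ^ (q - 2)) * ENNReal.ofReal f) t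

lemma lintegral_Ioi_layerBound (hq0 : 0 < q) (hq1 : q < 1) {f : ℝ} (hf : 0 < f) :
    ∫⁻ t in Ioi 0, layerBound q f t = ENNReal.ofReal (f ^ q) := by
  unfold layerBound
  rw [lintegral_add_left ((by fun_prop : Measurable fun t : ℝ =>
      ENNReal.ofReal (1 - q) * ENNReal.ofReal (q * t ^ (q - 1))).indicator measurableSet_Ioc),
    lintegral_indicator measurableSet_Ioc, lintegral_indicator measurableSet_Ioi,
    Measure.restrict_restrict measurableSet_Ioc, Measure.restrict_restrict measurableSet_Ioi,
    inter_eq_self_of_subset_left Ioc_subset_Ioi_self,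
    inter_eq_self_of_subset_left (Ioi_subset_Ioi hf.le),
    lintegral_const_mul' _ _ ENNReal.ofReal_ne_top, lintegral_mul_const' _ _ ENNReal.ofReal_ne_top,
    lintegral_const_mul' _ _ ENNReal.ofReal_ne_top, setLIntegral_congr Ioo_ae_eq_Ioc.symm,
    lintegral_Ioo_ofReal_mul_rpow hq0 hf.le, lintegral_Ioi_ofReal_mul_rpow hq1 hf,
    ← ENNReal.ofReal_mul (by linarith), ← ENNReal.ofReal_mul hq0.le,
    ← ENNReal.ofReal_mul (by positivity),
    ← ENNReal.ofReal_add (by nlinarith [Real.rpow_nonneg hf.le q]) (by positivity)]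
  congr 1
  have : f ^ (q - 1) * f = f ^ q := by rw [← Real.rpow_add_one hf.ne', sub_add_cancel]
  linear_combination q * this

section WeakTypeMajorant

variable {μ ν : Measure X} [IsProbabilityMeasure μ] {f : ℝ} {g : X → ℝ≥0∞}
  (hgf : ∀ x, ENNReal.ofReal f ≤ g x) (hν : ν univ ≤ ENNReal.ofReal f)
  (hweak : ∀ t, 0 < t →
    ENNReal.ofReal t * μ {x | ENNReal.ofReal t < g x} ≤ ν {x | ENNReal.ofReal t < g x})
include hgf hν hweak

/-- For `t ≤ f` the set `{g < t}` is empty; for `t > f` the weak type inequality turns the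
`μ`-term into a `ν`-term, and the two `ν`-terms add up to at most `ν(X) ≤ f`. -/
lemma layer_integrand_le_layerBound (hq0 : 0 < q) (hq1 : q < 1) (hg : Measurable g) {t : ℝ}
    (ht : 0 < t) :
    ENNReal.ofReal (1 - q) * (ENNReal.ofReal (q * t ^ (q - 1)) * μ {x | ENNReal.ofReal t < g x}) +
        ENNReal.ofReal q * (ENNReal.ofReal ((1 - q) * t ^ (q - 2)) * ν {x | g x < ENNReal.ofReal t})
      ≤ layerBound q f t := by
  rcases le_or_gt t f with htf | htf
  · have hempty : {x | g x < ENNReal.ofReal t} = ∅ := eq_empty_of_forall_notMem fun x hx =>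
      (hx.trans_le ((ENNReal.ofReal_le_ofReal htf).trans (hgf x))).false
    rw [layerBound, hempty, measure_empty, mul_zero, mul_zero, add_zero,
      indicator_of_mem (show t ∈ Ioc 0 f from ⟨ht, htf⟩),
      indicator_of_notMem (show t ∉ Ioi f from htf.not_gt), add_zero]
    exact mul_le_mul_right (mul_le_of_le_one_right' (prob_le_one (μ := μ))) _
  · have hab : ENNReal.ofReal (1 - q) * ENNReal.ofReal (q * t ^ (q - 1)) =
        ENNReal.ofReal q * ENNReal.ofReal ((1 - q) * t ^ (q - 2)) * ENNReal.ofReal t := by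
      rw [← ENNReal.ofReal_mul (by linarith), ← ENNReal.ofReal_mul hq0.le,
        ← ENNReal.ofReal_mul (mul_nonneg hq0.le (mul_nonneg (by linarith) (by positivity)))]
      congr 1
      rw [show q - 1 = q - 2 + 1 by ring, Real.rpow_add_one ht.ne']
      ring
    rw [layerBound, indicator_of_notMem (show t ∉ Ioc 0 f from fun h => h.2.not_gt htf),
      indicator_of_mem (show t ∈ Ioi f from htf), zero_add, ← mul_assoc, hab, mul_assoc,
      ← mul_assoc (ENNReal.ofReal q), ← mul_add]
    refine mul_le_mul_right ?_ _
    calc ENNReal.ofReal t * μ {x | ENNReal.ofReal t < g x} + ν {x | g x < ENNReal.ofReal t}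
        ≤ ν {x | ENNReal.ofReal t < g x} + ν {x | ENNReal.ofReal t < g x}ᶜ := by
          gcongr
          · exact hweak t ht
          · exact fun x (hx : g x < _) => lt_asymm hx
      _ = ν univ := measure_add_measure_compl (measurableSet_lt measurable_const hg)
      _ ≤ ENNReal.ofReal f := hν

theorem one_sub_mul_lintegral_rpow_add_le [SFinite ν] (hq0 : 0 < q) (hq1 : q < 1) (hf : 0 < f)
    (hg : Measurable g) :
    ENNReal.ofReal (1 - q) * ∫⁻ x, g x ^ q ∂μ + ENNReal.ofReal q * ∫⁻ x, g x ^ (q - 1) ∂ν ≤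
      ENNReal.ofReal (f ^ q) := by
  have hg0 (x : X) : g x ≠ 0 := ((ENNReal.ofReal_pos.2 hf).trans_le (hgf x)).ne'
  rw [lintegral_rpow_eq_lintegral_meas_lt hq0 hg,
    lintegral_rpow_sub_one_eq_lintegral_meas_gt hq1 hg hg0,
    ← lintegral_const_mul' _ _ ENNReal.ofReal_ne_top,
    ← lintegral_const_mul' _ _ ENNReal.ofReal_ne_top,
    ← lintegral_Ioi_layerBound hq0 hq1 hf]
  exact (le_lintegral_add _ _).trans <| lintegral_mono_ae <|
    (ae_restrict_iff' measurableSet_Ioi).2 <|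
    ae_of_all _ fun t ht => layer_integrand_le_layerBound hgf hν hweak hq0 hq1 hg ht

end WeakTypeMajorant

end LayerCake

section Tangent

variable {q : ℝ}

lemma Real.rpow_le_tangent_line (hq0 : 0 < q) (hq1 : q < 1) {z t : ℝ} (hz : 0 ≤ z) (ht : 0 < t) :
    z ^ q ≤ q * (z * t ^ (q - 1)) + (1 - q) * t ^ q := by
  have h := Real.geom_mean_le_arith_mean2_weighted hq0.le (by linarith : 0 ≤ 1 - q)
    (mul_nonneg hz (Real.rpow_nonneg ht.le (q - 1))) (Real.rpow_nonneg ht.le q) (by ring)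
  convert h using 1
  rw [Real.mul_rpow hz (Real.rpow_nonneg ht.le _), ← Real.rpow_mul ht.le, ← Real.rpow_mul ht.le,
    mul_assoc, ← Real.rpow_add ht, show (q - 1) * q + q * (1 - q) = 0 by ring, Real.rpow_zero,
    mul_one]

lemma ENNReal.rpow_le_tangent_line (hq0 : 0 < q) (hq1 : q < 1) (a : ℝ≥0∞) {b : ℝ≥0∞}
    (hb : b ≠ 0) :
    a ^ q ≤ ENNReal.ofReal q * (a * b ^ (q - 1)) + ENNReal.ofReal (1 - q) * b ^ q := by
  rcases eq_or_ne b ⊤ with rfl | hb'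
  · simp [ENNReal.top_rpow_of_pos hq0, ENNReal.mul_top, hq1]
  rcases eq_or_ne a ⊤ with rfl | ha
  · have : b ^ (q - 1) ≠ 0 := (ENNReal.rpow_pos (pos_iff_ne_zero.2 hb) hb').ne'
    simp [ENNReal.top_mul this, ENNReal.mul_top, hq0]
  have hbpos : 0 < b.toReal := ENNReal.toReal_pos hb hb'
  rw [← ENNReal.ofReal_toReal ha, ← ENNReal.ofReal_toReal hb',
    ENNReal.ofReal_rpow_of_nonneg ENNReal.toReal_nonneg hq0.le, ENNReal.ofReal_rpow_of_pos hbpos,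
    ENNReal.ofReal_rpow_of_pos hbpos, ← ENNReal.ofReal_mul ENNReal.toReal_nonneg,
    ← ENNReal.ofReal_mul hq0.le, ← ENNReal.ofReal_mul (by linarith),
    ← ENNReal.ofReal_add (by positivity) (mul_nonneg (by linarith) (by positivity))]
  exact ENNReal.ofReal_le_ofReal (Real.rpow_le_tangent_line hq0 hq1 ENNReal.toReal_nonneg hbpos)

lemma rpow_mul_setLIntegral_le {μ : Measure X} (hq0 : 0 < q) (hq1 : q < 1) {φ : X → ℝ}
    (hφ : AEMeasurable φ μ) {g : X → ℝ≥0∞} (hg : Measurable g) (hg0 : ∀ x, g x ≠ 0)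
    {E : Set X} (hE : MeasurableSet E) (c : ℝ≥0∞) :
    c ^ q * ∫⁻ x in E, ENNReal.ofReal (φ x) ^ q ∂μ ≤
      ENNReal.ofReal q * c *
          ∫⁻ x in E, g x ^ (q - 1) ∂μ.withDensity (fun x => ENNReal.ofReal (φ x)) +
        ENNReal.ofReal (1 - q) * ∫⁻ x in E, g x ^ q ∂μ := by
  have hΦ : AEMeasurable (fun x => ENNReal.ofReal (φ x)) (μ.restrict E) :=
    hφ.ennreal_ofReal.restrict
  rw [setLIntegral_withDensity_eq_setLIntegral_mul_non_measurable₀ _ hΦ _ hE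
      (ae_of_all _ fun _ => ENNReal.ofReal_lt_top),
    ← lintegral_const_mul'' _ (hΦ.pow_const q),
    ← lintegral_const_mul'' _ (hΦ.mul (hg.pow_const _).aemeasurable),
    ← lintegral_const_mul _ (hg.pow_const q),
    ← lintegral_add_right _ ((hg.pow_const q).const_mul _)]
  refine lintegral_mono fun x => ?_
  rw [← ENNReal.mul_rpow_of_nonneg _ _ hq0.le]
  refine (ENNReal.rpow_le_tangent_line hq0 hq1 _ (hg0 x)).trans_eq ?_
  simp only [Pi.mul_apply]
  ring

end Tangent

lemma lintegral_eq_setLIntegral_compl_iUnion_add_tsum {ρ : Measure X} {ι : Type*} [Countable ι]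
    {I : ι → Set X} (hI : ∀ j, MeasurableSet (I j)) (hdisj : Pairwise (Function.onFun Disjoint I))
    (F : X → ℝ≥0∞) :
    ∫⁻ x, F x ∂ρ = ∫⁻ x in (⋃ j, I j)ᶜ, F x ∂ρ + ∑' j, ∫⁻ x in I j, F x ∂ρ := by
  rw [← lintegral_iUnion hI hdisj, add_comm, lintegral_add_compl _ (MeasurableSet.iUnion hI)]

namespace DTree

variable {μ : Measure X} [IsProbabilityMeasure μ] (T : DTree X μ) {φ : X → ℝ}
  (h0 : ∀ x, 0 ≤ φ x) (hint : Integrable φ μ) {ι : Type*} {I : ι → Set X}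
  (hI : ∀ j, I j ∈ trS μ T φ) (hdisj : Pairwise (Function.onFun Disjoint I))
include h0 hint hI hdisj

lemma setLIntegral_trMaxOn_stoppedFamily_rpow (ρ : Measure X) (p : ℝ) (j : ι) :
    ∫⁻ x in I j, trMaxOn μ (T.stoppedFamily I) φ x ^ p ∂ρ =
      ENNReal.ofReal (trAvg μ φ (I j)) ^ p * ρ (I j) := by
  rw [setLIntegral_congr_fun (T.meas _ (T.trS_subset_mem (hI j))) fun x hx => by
    rw [T.trMaxOn_stoppedFamily_of_mem I h0 hint hI hdisj hx], setLIntegral_const]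

/-- On `I j` the stopped maximal function is the constant `Av_{I j}(φ)`, so that there both
integrands of the layer-cake estimate integrate to `μ(I j) Av_{I j}(φ)^q`. -/
lemma lintegral_compl_iUnion_estimate [Countable ι] {q : ℝ} (hq0 : 0 < q) (hq1 : q < 1)
    (hf : 0 < ∫ x, φ x ∂μ) :
    ENNReal.ofReal (1 - q) * ∫⁻ x in (⋃ j, I j)ᶜ, trMaxOn μ (T.stoppedFamily I) φ x ^ q ∂μ +
        ENNReal.ofReal q * ∫⁻ x in (⋃ j, I j)ᶜ, trMaxOn μ (T.stoppedFamily I) φ x ^ (q - 1)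
          ∂μ.withDensity (fun x => ENNReal.ofReal (φ x)) +
        ∑' j, ENNReal.ofReal (trAvg μ φ (I j)) ^ q * μ (I j) ≤
      ENNReal.ofReal ((∫ x, φ x ∂μ) ^ q) := by
  set ν := μ.withDensity (fun x => ENNReal.ofReal (φ x))
  have hIm (j : ι) : MeasurableSet (I j) := T.meas _ (T.trS_subset_mem (hI j))
  have hν : ν univ ≤ ENNReal.ofReal (∫ x, φ x ∂μ) := by
    rw [withDensity_ofReal_apply h0 hint MeasurableSet.univ, measure_univ, mul_one, trAvg_univ]
  have hcake := one_sub_mul_lintegral_rpow_add_le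
    (fun _ => T.ofReal_integral_le_trMaxOn_stoppedFamily I) hν
    (fun t _ => T.ofReal_mul_measure_lt_trMaxOn_le h0 hint (T.stoppedFamily_subset_mem I) t)
    hq0 hq1 hf (T.measurable_trMaxOn_stoppedFamily I)
  have hatom (j : ι) : ∫⁻ x in I j, trMaxOn μ (T.stoppedFamily I) φ x ^ (q - 1) ∂ν =
      ENNReal.ofReal (trAvg μ φ (I j)) ^ q * μ (I j) := by
    have hy : 0 < trAvg μ φ (I j) := hf.trans_le <| trAvg_univ (μ := μ) (φ := φ) ▸
      T.trAvg_le_of_mem_trS h0 hint (hI j) T.top_mem (subset_univ _)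
    have hy0 : ENNReal.ofReal (trAvg μ φ (I j)) ≠ 0 := (ENNReal.ofReal_pos.2 hy).ne'
    rw [T.setLIntegral_trMaxOn_stoppedFamily_rpow h0 hint hI hdisj,
      withDensity_ofReal_apply h0 hint (hIm j), ← mul_assoc]
    conv_rhs => rw [← sub_add_cancel q 1, ENNReal.rpow_add _ _ hy0 ENNReal.ofReal_ne_top,
      ENNReal.rpow_one]
  rw [lintegral_eq_setLIntegral_compl_iUnion_add_tsum (ρ := μ) hIm hdisj,
    lintegral_eq_setLIntegral_compl_iUnion_add_tsum (ρ := ν) hIm hdisj] at hcake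
  simp_rw [T.setLIntegral_trMaxOn_stoppedFamily_rpow h0 hint hI hdisj μ, hatom] at hcake
  refine le_trans (le_of_eq ?_) hcake
  have hsum : ENNReal.ofReal (1 - q) + ENNReal.ofReal q = 1 := by
    rw [← ENNReal.ofReal_add (by linarith) hq0.le, sub_add_cancel, ENNReal.ofReal_one]
  rw [mul_add, mul_add, add_add_add_comm, ← add_mul, hsum, one_mul]

end DTree

lemma toReal_le_of_lintegral_bounds {q β f : ℝ} (hq0 : 0 < q) (hq1 : q < 1) (hβ : 0 < β)
    (hf : 0 ≤ f) {G H P S : ℝ≥0∞}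
    (hGHS : ENNReal.ofReal (1 - q) * G + ENNReal.ofReal q * H + S ≤ ENNReal.ofReal (f ^ q))
    (hP : ENNReal.ofReal (β + 1) ^ q * P ≤
      ENNReal.ofReal q * ENNReal.ofReal (β + 1) * H + ENNReal.ofReal (1 - q) * G) :
    G.toReal ≤ 1 / ((1 - q) * β) * ((β + 1) * (f ^ q - S.toReal) - (β + 1) ^ q * P.toReal) := by
  have hfin := ne_top_of_le_ne_top ENNReal.ofReal_ne_top hGHS
  have hG : G ≠ ⊤ := by
    rintro rfl
    simp [ENNReal.mul_top, hq1] at hfin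
  have hH : H ≠ ⊤ := by
    rintro rfl
    simp [ENNReal.mul_top, hq0] at hfin
  have hS : S ≠ ⊤ := by
    rintro rfl
    simp at hfin
  have h1 := ENNReal.toReal_mono ENNReal.ofReal_ne_top hGHS
  have h2 := ENNReal.toReal_mono (by finiteness) hP
  simp only [ENNReal.toReal_add, ENNReal.toReal_mul, ne_eq, hG, hH, hS, ENNReal.mul_eq_top,
    ENNReal.ofReal_ne_top, not_false_eq_true, false_and, and_false, or_self, ← ENNReal.toReal_rpow,
    ENNReal.add_eq_top] at h1 h2
  rw [ENNReal.toReal_ofReal (Real.rpow_nonneg hf q), ENNReal.toReal_ofReal (by linarith),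
    ENNReal.toReal_ofReal hq0.le] at h1
  rw [ENNReal.toReal_ofReal (by linarith), ENNReal.toReal_ofReal hq0.le,
    ENNReal.toReal_ofReal (by linarith)] at h2
  rw [one_div, ← div_eq_inv_mul, le_div_iff₀ (by nlinarith)]
  nlinarith [mul_le_mul_of_nonneg_left h1 (by linarith : (0 : ℝ) ≤ β + 1)]

lemma tsum_toReal_measure_mul_trAvg_rpow {μ : Measure X} [IsFiniteMeasure μ] {φ : X → ℝ}
    (h0 : ∀ x, 0 ≤ φ x) {ι : Type*} (I : ι → Set X) {q : ℝ} (hq : 0 ≤ q) :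
    ∑' j, (μ (I j)).toReal * trAvg μ φ (I j) ^ q =
      (∑' j, ENNReal.ofReal (trAvg μ φ (I j)) ^ q * μ (I j)).toReal := by
  rw [ENNReal.tsum_toReal_eq fun j => ENNReal.mul_ne_top
    (ENNReal.rpow_ne_top_of_nonneg hq ENNReal.ofReal_ne_top) (measure_ne_top μ _)]
  simp_rw [ENNReal.toReal_mul, ← ENNReal.toReal_rpow, ENNReal.toReal_ofReal (trAvg_nonneg h0 _),
    mul_comm]

lemma integral_rpow_eq_toReal_lintegral {ρ : Measure X} {φ : X → ℝ} (h0 : ∀ x, 0 ≤ φ x)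
    (hφ : AEMeasurable φ ρ) {q : ℝ} (hq : 0 ≤ q) :
    ∫ x, φ x ^ q ∂ρ = (∫⁻ x, ENNReal.ofReal (φ x) ^ q ∂ρ).toReal := by
  rw [← integral_toReal (hφ.ennreal_ofReal.pow_const q)
    (ae_of_all _ fun _ => ENNReal.rpow_lt_top_of_nonneg hq ENNReal.ofReal_ne_top)]
  simp_rw [← ENNReal.toReal_rpow, ENNReal.toReal_ofReal (h0 _)]

section Degenerate

variable {μ : Measure X} {φ : X → ℝ} (h0 : ∀ x, 0 ≤ φ x) (hint : Integrable φ μ)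
  (hf : ∫ x, φ x ∂μ = 0)
include h0 hint hf

lemma trAvg_eq_zero_of_integral_eq_zero (K : Set X) : trAvg μ φ K = 0 := by
  have hφ : φ =ᵐ[μ] 0 := (integral_eq_zero_iff_of_nonneg h0 hint).1 hf
  simp [trAvg, integral_congr_ae (ae_restrict_of_ae hφ)]

lemma trMax_eq_zero_of_integral_eq_zero (T : DTree X μ) (x : X) : trMax μ T φ x = 0 := by
  have : {r | ∃ I ∈ T.mem, x ∈ I ∧ r = trAvg μ φ I} = {0} := by
    ext r
    simp only [trAvg_eq_zero_of_integral_eq_zero h0 hint hf, mem_ofPred_eq, mem_singleton_iff]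
    exact ⟨fun ⟨_, _, _, h⟩ => h, fun h => ⟨univ, T.top_mem, mem_univ x, h⟩⟩
  rw [trMax_of_nonneg T h0, this, csSup_singleton]

lemma setIntegral_rpow_eq_zero_of_integral_eq_zero {q : ℝ} (hq : 0 < q) (s : Set X) :
    ∫ x in s, φ x ^ q ∂μ = 0 := by
  refine integral_eq_zero_of_ae (ae_restrict_of_ae ?_)
  filter_upwards [(integral_eq_zero_iff_of_nonneg h0 hint).1 hf] with x hx
  simp [hx, Real.zero_rpow hq.ne']

end Degenerate

namespace DTree

variable {μ : Measure X} [IsProbabilityMeasure μ] (T : DTree X μ) {φ : X → ℝ} {ι : Type*}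
  [Countable ι] (I : ι → Set X)

lemma setIntegral_trMax_rpow_eq_toReal (h0 : ∀ x, 0 ≤ φ x) (hint : Integrable φ μ)
    (hI : ∀ j, MeasurableSet (I j)) {q : ℝ} (hq : 0 ≤ q) :
    ∫ x in (⋃ j, I j)ᶜ, trMax μ T φ x ^ q ∂μ =
      (∫⁻ x in (⋃ j, I j)ᶜ, trMaxOn μ (T.stoppedFamily I) φ x ^ q ∂μ).toReal := by
  have hfin := T.ae_trMaxOn_lt_top h0 hint subset_rfl
  have hE : MeasurableSet (⋃ j, I j)ᶜ := (MeasurableSet.iUnion hI).compl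
  rw [← integral_toReal ((T.measurable_trMaxOn_stoppedFamily I).pow_const q).aemeasurable]
  · refine setIntegral_congr_ae hE (hfin.mono fun x hx hxE => ?_)
    rw [← ENNReal.toReal_rpow, T.trMaxOn_stoppedFamily_of_notMem I hxE,
      trMax_eq_toReal_trMaxOn T h0 hx.ne]
  · refine (ae_restrict_iff' hE).2 (hfin.mono fun x hx hxE => ?_)
    rw [T.trMaxOn_stoppedFamily_of_notMem I hxE]
    exact ENNReal.rpow_lt_top_of_nonneg hq hx.ne

end DTree

theorem statement12_general {X : Type*} [MeasurableSpace X] (μ : Measure X)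
    [IsProbabilityMeasure μ] (T : DTree X μ)
    (q f : ℝ) (hq : q ∈ Set.Ioo (0 : ℝ) 1)
    (φ : X → ℝ) (h0 : ∀ x, 0 ≤ φ x) (hint : Integrable φ μ)
    (hf : (∫ x, φ x ∂μ) = f)
    {ι : Type*} [Countable ι] (I : ι → Set X)
    (hmem : ∀ j, I j ∈ trS μ T φ) (hdisj : Pairwise (Function.onFun Disjoint I))
    (β : ℝ) (hβ : 0 < β) :
    (∫ x in (⋃ j, I j)ᶜ, (trMax μ T φ x) ^ q ∂μ) ≤
      (1 / ((1 - q) * β)) *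
        ((β + 1) * (f ^ q - ∑' j, (μ (I j)).toReal * trAvg μ φ (I j) ^ q) -
          (β + 1) ^ q * ∫ x in (⋃ j, I j)ᶜ, φ x ^ q ∂μ) := by
  obtain ⟨hq0, hq1⟩ := hq
  subst hf
  have hIm (j : ι) : MeasurableSet (I j) := T.meas _ (T.trS_subset_mem (hmem j))
  rcases (integral_nonneg (μ := μ) (f := φ) h0).eq_or_lt with hf0 | hfpos
  · simp [trMax_eq_zero_of_integral_eq_zero h0 hint hf0.symm,
      trAvg_eq_zero_of_integral_eq_zero h0 hint hf0.symm,
      setIntegral_rpow_eq_zero_of_integral_eq_zero h0 hint hf0.symm hq0, ← hf0,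
      Real.zero_rpow hq0.ne']
  rw [T.setIntegral_trMax_rpow_eq_toReal I h0 hint hIm hq0.le,
    tsum_toReal_measure_mul_trAvg_rpow h0 I hq0.le,
    integral_rpow_eq_toReal_lintegral h0 hint.aemeasurable.restrict hq0.le]
  refine toReal_le_of_lintegral_bounds hq0 hq1 hβ hfpos.le
    (T.lintegral_compl_iUnion_estimate h0 hint hmem hdisj hq0 hq1 hfpos) ?_
  exact rpow_mul_setLIntegral_le hq0 hq1 hint.aemeasurable (T.measurable_trMaxOn_stoppedFamily I)
    (fun x => ((ENNReal.ofReal_pos.2 hfpos).trans_le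
      (T.ofReal_integral_le_trMaxOn_stoppedFamily I)).ne')
    (MeasurableSet.iUnion hIm).compl _

/-- the basic inequality for a maximal pairwise disjoint family in `S_φ`. -/
theorem statement12 {X : Type*} [MeasurableSpace X] (μ : Measure X)
    [IsProbabilityMeasure μ] [NullSingletonClass μ] (T : DTree X μ)
    (q f : ℝ) (hq : q ∈ Set.Ioo (0 : ℝ) 1)
    (φ : X → ℝ) (h0 : ∀ x, 0 ≤ φ x) (hint : Integrable φ μ) (hgood : TGood μ T φ)
    (hf : (∫ x, φ x ∂μ) = f)
    {ι : Type*} [Countable ι] (I : ι → Set X)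
    (hmem : ∀ j, I j ∈ trS μ T φ) (hdisj : Pairwise (Function.onFun Disjoint I))
    (hmax : ∀ K ∈ trS μ T φ, (K ∩ ⋃ j, I j).Nonempty)
    (β : ℝ) (hβ : 0 < β) :
    (∫ x in (⋃ j, I j)ᶜ, (trMax μ T φ x) ^ q ∂μ) ≤
      (1 / ((1 - q) * β)) *
        ((β + 1) * (f ^ q - ∑' j, (μ (I j)).toReal * trAvg μ φ (I j) ^ q) -
          (β + 1) ^ q * ∫ x in (⋃ j, I j)ᶜ, φ x ^ q ∂μ) :=
  statement12_general μ T q f hq φ h0 hint hf I hmem hdisj β hβ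

end
end

section
/- Let (X,μ) be a measure space, q ∈ (0,1) fixed, and for each n let X_n ⊆ X be measurable and let h_n : X_n → [0,∞) and g_n : X → [0,∞) be measurable functions with g_n ≥ h_n on X_n. Set z_n = h_n^q on X_n and w_n = g_n^q on X. If lim_n ∫_{X_n} (w_n − z_n) dμ = 0 and the sequence ( ∫_{X_n} w_n dμ )_n is bounded, then lim_n ∫_{X_n} (g_n − h_n)^q dμ = 0. -/
open MeasureTheory Filter Set

open Real in
private lemma st18_step1 {q a b : ℝ} (hq0 : 0 < q) (hq1 : q < 1)
    (hb : 0 ≤ b) (hab : b ≤ a) : q * (a - b) ≤ a ^ (1 - q) * (a ^ q - b ^ q) := by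
  rcases eq_or_lt_of_le (hb.trans hab) with ha | ha
  · obtain rfl : a = 0 := ha.symm
    obtain rfl : b = 0 := le_antisymm hab hb
    simp
  · have ht0 : 0 ≤ b / a := div_nonneg hb ha.le
    have hB : (1 + (b / a - 1)) ^ q ≤ 1 + q * (b / a - 1) :=
      rpow_one_add_le_one_add_mul_self (by linarith) hq0.le hq1.le
    have hB' : (b / a) ^ q ≤ 1 + q * (b / a - 1) := by
      have : (1 : ℝ) + (b / a - 1) = b / a := by ring
      rwa [this] at hB
    have f1 : a ^ (1 - q) * a ^ q = a := by
      rw [← Real.rpow_add ha]; simp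
    have f2 : (b / a) ^ q * a ^ q = b ^ q := by
      rw [← Real.mul_rpow ht0 ha.le, div_mul_cancel₀ _ ha.ne']
    have f4 : (0 : ℝ) < a ^ q := Real.rpow_pos_of_pos ha q
    have f5 : (0 : ℝ) ≤ a ^ (1 - q) := Real.rpow_nonneg ha.le _
    have f6 : b / a * a = b := div_mul_cancel₀ _ ha.ne'
    have hb' : b ^ q ≤ (1 + q * (b / a - 1)) * a ^ q := by
      rw [← f2]; exact mul_le_mul_of_nonneg_right hB' f4.le
    have e2 : a ^ (1 - q) * b ^ q ≤ a + q * b - q * a := by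
      calc a ^ (1 - q) * b ^ q ≤ a ^ (1 - q) * ((1 + q * (b / a - 1)) * a ^ q) :=
            mul_le_mul_of_nonneg_left hb' f5
        _ = (a ^ (1 - q) * a ^ q) + q * (b / a * (a ^ (1 - q) * a ^ q))
            - q * (a ^ (1 - q) * a ^ q) := by ring
        _ = a + q * b - q * a := by rw [f1, f6]
    have e3 : a ^ (1 - q) * (a ^ q - b ^ q) = a - a ^ (1 - q) * b ^ q := by
      rw [mul_sub, f1]
    linarith

open Real in
private lemma st18_pt {q a b ε : ℝ} (hq0 : 0 < q) (hq1 : q < 1)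
    (hb : 0 ≤ b) (hab : b ≤ a) (hε : 0 < ε) :
    (a - b) ^ q ≤ q ^ (-q) * (ε ^ q * (q * ((a ^ q - b ^ q) / ε) + (1 - q) * a ^ q)) := by
  have ha : 0 ≤ a := hb.trans hab
  have hab' : 0 ≤ a - b := sub_nonneg.2 hab
  have hd : 0 ≤ a ^ q - b ^ q := sub_nonneg.2 (Real.rpow_le_rpow hb hab hq0.le)
  have h1 : q * (a - b) ≤ a ^ (1 - q) * (a ^ q - b ^ q) := st18_step1 hq0 hq1 hb hab
  have h2 : a - b ≤ q⁻¹ * (a ^ (1 - q) * (a ^ q - b ^ q)) := by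
    rw [le_inv_mul_iff₀ hq0]; linarith
  have h3 : (a - b) ^ q ≤ (q⁻¹ * (a ^ (1 - q) * (a ^ q - b ^ q))) ^ q :=
    Real.rpow_le_rpow hab' h2 hq0.le
  have hX : 0 ≤ a ^ (1 - q) * (a ^ q - b ^ q) :=
    mul_nonneg (Real.rpow_nonneg ha _) hd
  have h4 : (q⁻¹ * (a ^ (1 - q) * (a ^ q - b ^ q))) ^ q
      = q ^ (-q) * ((a ^ (1 - q)) ^ q * (a ^ q - b ^ q) ^ q) := by
    rw [Real.mul_rpow (inv_nonneg.2 hq0.le) hX,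
        Real.mul_rpow (Real.rpow_nonneg ha _) hd,
        Real.inv_rpow hq0.le, ← Real.rpow_neg hq0.le]
  -- Young's inequality part
  have hu : 0 ≤ (a ^ q - b ^ q) / ε := div_nonneg hd hε.le
  have hv : 0 ≤ a ^ q := Real.rpow_nonneg ha q
  have hY : ((a ^ q - b ^ q) / ε) ^ q * (a ^ q) ^ (1 - q)
      ≤ q * ((a ^ q - b ^ q) / ε) + (1 - q) * a ^ q :=
    Real.geom_mean_le_arith_mean2_weighted hq0.le (by linarith) hu hv (by ring)
  have hεq : (0 : ℝ) < ε ^ q := Real.rpow_pos_of_pos hε q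
  have hY' : ε ^ q * (((a ^ q - b ^ q) / ε) ^ q * (a ^ q) ^ (1 - q))
      ≤ ε ^ q * (q * ((a ^ q - b ^ q) / ε) + (1 - q) * a ^ q) :=
    mul_le_mul_of_nonneg_left hY hεq.le
  have hid : ε ^ q * (((a ^ q - b ^ q) / ε) ^ q * (a ^ q) ^ (1 - q))
      = (a ^ (1 - q)) ^ q * (a ^ q - b ^ q) ^ q := by
    rw [Real.div_rpow hd hε.le, ← Real.rpow_mul ha, ← Real.rpow_mul ha, mul_comm (1 - q) q]
    field_simp
  have hK : (0 : ℝ) ≤ q ^ (-q) := (Real.rpow_pos_of_pos hq0 _).le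
  calc (a - b) ^ q ≤ q ^ (-q) * ((a ^ (1 - q)) ^ q * (a ^ q - b ^ q) ^ q) := h4 ▸ h3
    _ = q ^ (-q) * (ε ^ q * (((a ^ q - b ^ q) / ε) ^ q * (a ^ q) ^ (1 - q))) := by rw [hid]
    _ ≤ q ^ (-q) * (ε ^ q * (q * ((a ^ q - b ^ q) / ε) + (1 - q) * a ^ q)) :=
        mul_le_mul_of_nonneg_left hY' hK

/-- if `g_n ≥ h_n ≥ 0` on `X_n`, `∫_{X_n} (g_n^q - h_n^q) dμ → 0` and
`∫_{X_n} g_n^q dμ` is bounded, then `∫_{X_n} (g_n - h_n)^q dμ → 0`. -/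
theorem statement18 {X : Type*} [MeasurableSpace X] (μ : Measure X)
    (q : ℝ) (hq : q ∈ Set.Ioo (0 : ℝ) 1)
    (Xn : ℕ → Set X) (hXn : ∀ n, MeasurableSet (Xn n))
    (g h : ℕ → X → ℝ) (hgm : ∀ n, Measurable (g n)) (hhm : ∀ n, Measurable (h n))
    (hg0 : ∀ n x, 0 ≤ g n x) (hh0 : ∀ n, ∀ x ∈ Xn n, 0 ≤ h n x)
    (hge : ∀ n, ∀ x ∈ Xn n, h n x ≤ g n x)
    (hwint : ∀ n, IntegrableOn (fun x => g n x ^ q) (Xn n) μ)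
    (hzint : ∀ n, IntegrableOn (fun x => h n x ^ q) (Xn n) μ)
    (hlim : Tendsto (fun n => ∫ x in Xn n, (g n x ^ q - h n x ^ q) ∂μ) atTop (nhds 0))
    (hbd : ∃ C : ℝ, ∀ n, (∫ x in Xn n, g n x ^ q ∂μ) ≤ C) :
    Tendsto (fun n => ∫ x in Xn n, (g n x - h n x) ^ q ∂μ) atTop (nhds 0) := by
  obtain ⟨hq0, hq1⟩ := hq
  obtain ⟨C, hC⟩ := hbd
  set C' : ℝ := max C 0 with hC'def
  have hC'0 : 0 ≤ C' := le_max_right _ _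
  have hCn : ∀ n, (∫ x in Xn n, g n x ^ q ∂μ) ≤ C' := fun n => (hC n).trans (le_max_left _ _)
  set I : ℕ → ℝ := fun n => ∫ x in Xn n, (g n x ^ q - h n x ^ q) ∂μ with hIdef
  have hI0 : ∀ n, 0 ≤ I n := fun n =>
    setIntegral_nonneg (hXn n) fun x hx =>
      sub_nonneg.2 (Real.rpow_le_rpow (hh0 n x hx) (hge n x hx) hq0.le)
  set ε : ℕ → ℝ := fun n => I n + 1 / (n + 1) with hεdef
  have hεpos : ∀ n, 0 < ε n := fun n =>
    add_pos_of_nonneg_of_pos (hI0 n) (by positivity)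
  have hεlim : Tendsto ε atTop (nhds 0) := by
    have := hlim.add tendsto_one_div_add_atTop_nhds_zero_nat
    simpa [hεdef, one_div] using this
  have hdiff : ∀ n, IntegrableOn (fun x => g n x ^ q - h n x ^ q) (Xn n) μ :=
    fun n => (hwint n).sub (hzint n)
  have hA_meas : ∀ n, Measurable (fun x => (g n x - h n x) ^ q) := by
    intro n
    have := (hgm n).sub (hhm n)
    measurability
  have hA_int : ∀ n, IntegrableOn (fun x => (g n x - h n x) ^ q) (Xn n) μ := by
    intro n
    refine Integrable.mono' (hwint n) (hA_meas n).aestronglyMeasurable ?_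
    filter_upwards [ae_restrict_mem (hXn n)] with x hx
    rw [Real.norm_eq_abs, abs_of_nonneg (Real.rpow_nonneg (sub_nonneg.2 (hge n x hx)) q)]
    exact Real.rpow_le_rpow (sub_nonneg.2 (hge n x hx))
      (sub_le_self _ (hh0 n x hx)) hq0.le
  have hA0 : ∀ n, 0 ≤ ∫ x in Xn n, (g n x - h n x) ^ q ∂μ := fun n =>
    setIntegral_nonneg (hXn n) fun x hx =>
      Real.rpow_nonneg (sub_nonneg.2 (hge n x hx)) q
  set c1 : ℕ → ℝ := fun n => q ^ (-q) * ε n ^ q * q / ε n with hc1def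
  set c2 : ℕ → ℝ := fun n => q ^ (-q) * ε n ^ q * (1 - q) with hc2def
  have key : ∀ n, (∫ x in Xn n, (g n x - h n x) ^ q ∂μ)
      ≤ c1 n * I n + c2 n * (∫ x in Xn n, g n x ^ q ∂μ) := by
    intro n
    have hmono : (∫ x in Xn n, (g n x - h n x) ^ q ∂μ)
        ≤ ∫ x in Xn n, (c1 n * (g n x ^ q - h n x ^ q) + c2 n * g n x ^ q) ∂μ := by
      refine setIntegral_mono_on (hA_int n)
        (((hdiff n).const_mul (c1 n)).add ((hwint n).const_mul (c2 n))) (hXn n) ?_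
      intro x hx
      have hpt := st18_pt hq0 hq1 (hh0 n x hx) (hge n x hx) (hεpos n)
      calc (g n x - h n x) ^ q
          ≤ q ^ (-q) * (ε n ^ q * (q * ((g n x ^ q - h n x ^ q) / ε n)
              + (1 - q) * g n x ^ q)) := hpt
        _ = c1 n * (g n x ^ q - h n x ^ q) + c2 n * g n x ^ q := by
            rw [hc1def, hc2def]; ring
    have heval : (∫ x in Xn n, (c1 n * (g n x ^ q - h n x ^ q) + c2 n * g n x ^ q) ∂μ)
        = c1 n * I n + c2 n * (∫ x in Xn n, g n x ^ q ∂μ) := by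
      rw [integral_add ((hdiff n).const_mul (c1 n)) ((hwint n).const_mul (c2 n)),
        integral_const_mul, integral_const_mul]
    exact hmono.trans_eq heval
  set D : ℝ := q ^ (-q) * (q + (1 - q) * C') with hDdef
  have hK : (0 : ℝ) ≤ q ^ (-q) := (Real.rpow_pos_of_pos hq0 _).le
  have hbound : ∀ n, (∫ x in Xn n, (g n x - h n x) ^ q ∂μ) ≤ D * ε n ^ q := by
    intro n
    refine (key n).trans ?_
    have hεq : (0 : ℝ) < ε n ^ q := Real.rpow_pos_of_pos (hεpos n) q
    have hIε : I n ≤ ε n := le_add_of_nonneg_right (by positivity)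
    have hc1nn : 0 ≤ c1 n := by
      rw [hc1def]
      exact div_nonneg (mul_nonneg (mul_nonneg hK hεq.le) hq0.le) (hεpos n).le
    have hc2nn : 0 ≤ c2 n := by
      rw [hc2def]
      exact mul_nonneg (mul_nonneg hK hεq.le) (by linarith)
    have h1 : c1 n * I n ≤ q ^ (-q) * ε n ^ q * q := by
      have heq : c1 n * ε n = q ^ (-q) * ε n ^ q * q := by
        rw [hc1def]; field_simp [(hεpos n).ne']
      calc c1 n * I n ≤ c1 n * ε n := mul_le_mul_of_nonneg_left hIε hc1nn
        _ = _ := heq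
    have h2 : c2 n * (∫ x in Xn n, g n x ^ q ∂μ) ≤ c2 n * C' :=
      mul_le_mul_of_nonneg_left (hCn n) hc2nn
    calc c1 n * I n + c2 n * (∫ x in Xn n, g n x ^ q ∂μ)
        ≤ q ^ (-q) * ε n ^ q * q + c2 n * C' := add_le_add h1 h2
      _ = D * ε n ^ q := by rw [hc2def, hDdef]; ring
  have hεq_lim : Tendsto (fun n => ε n ^ q) atTop (nhds 0) := by
    have := hεlim.rpow_const (Or.inr hq0.le)
    simpa [Real.zero_rpow hq0.ne'] using this
  have hDlim : Tendsto (fun n => D * ε n ^ q) atTop (nhds 0) := by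
    simpa using hεq_lim.const_mul D
  exact squeeze_zero hA0 hbound hDlim
end
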